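/- arXiv:2502.12298 — 3 statements merged into one kernel-verified Lean document; each statement's English description precedes it below -/
import Mathlib

section
/- Suppose B_{k+1} = B₀ + Σⱼ (yⱼ - Bⱼsⱼ)(yⱼ - Bⱼsⱼ)ᵀ / (sⱼᵀ(yⱼ - Bⱼsⱼ)) is a sum over m terms, with B₀ = δ·I for 0 < δ < δ_max, and each accepted pair satisfies |sⱼᵀ(yⱼ - Bⱼsⱼ)| > ε·‖sⱼ‖₂·‖yⱼ - Bⱼsⱼ‖₂ and ‖sⱼ‖₂ ≥ ε̃·‖yⱼ - Bⱼsⱼ‖₂ for constants ε, ε̃ > 0. Then ‖B_{k+1}‖_F ≤ √n·δ_max + m/(ε·ε̃). -/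
noncomputable def toEuc (n : ℕ) : Matrix (Fin n) (Fin n) ℝ →ₗ[ℝ] EuclideanSpace ℝ (Fin n × Fin n) where
  toFun A := WithLp.toLp 2 (fun p : Fin n × Fin n => A p.1 p.2)
  map_add' A B := rfl
  map_smul' c A := rfl

lemma toEuc_norm (n : ℕ) (A : Matrix (Fin n) (Fin n) ℝ) :
    ‖toEuc n A‖ = Real.sqrt (∑ i, ∑ i', (A i i')^2) := by
  rw [EuclideanSpace.norm_eq]
  congr 1
  rw [Fintype.sum_prod_type]
  exact Finset.sum_congr rfl fun i _ => Finset.sum_congr rfl fun i' _ => by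
    simp [toEuc, sq_abs]
    rfl

/-- Bound on the Frobenius norm of the limited-memory SR1 matrix:
‖δI + Σⱼ rⱼrⱼᵀ/(sⱼᵀrⱼ)‖_F ≤ √n·δ_max + m/(ε·ε̃). -/
theorem stmt8 (n m : ℕ) (hn : 1 ≤ n) (eps epst delta deltaMax : ℝ)
    (heps : 0 < eps) (hepst : 0 < epst) (hdelta : 0 < delta) (hmax : delta < deltaMax)
    (s r : Fin m → (Fin n → ℝ))
    (hacc : ∀ j, |∑ i, s j i * r j i| >
      eps * Real.sqrt (∑ i, (s j i)^2) * Real.sqrt (∑ i, (r j i)^2))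
    (hstep : ∀ j, Real.sqrt (∑ i, (s j i)^2) ≥ epst * Real.sqrt (∑ i, (r j i)^2))
    (B : Matrix (Fin n) (Fin n) ℝ)
    (hB : B = delta • (1 : Matrix (Fin n) (Fin n) ℝ) +
      ∑ j, (1 / (∑ i, s j i * r j i)) • (Matrix.of fun i i' => r j i * r j i')) :
    Real.sqrt (∑ i, ∑ i', (B i i')^2) ≤ Real.sqrt n * deltaMax + m / (eps * epst) := by
  rw [← toEuc_norm, hB, map_add, map_sum]
  have h1 : ‖toEuc n (delta • (1 : Matrix (Fin n) (Fin n) ℝ))‖ ≤ Real.sqrt n * deltaMax := by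
    rw [toEuc_norm]
    have : (∑ i : Fin n, ∑ i' : Fin n,
        ((delta • (1 : Matrix (Fin n) (Fin n) ℝ)) i i')^2) = n * delta^2 := by
      simp [Matrix.smul_apply, Matrix.one_apply, apply_ite (fun x : ℝ => (delta * x)^2),
        Finset.sum_ite_eq']
    rw [this, Real.sqrt_mul (by positivity), Real.sqrt_sq hdelta.le]
    have := Real.sqrt_nonneg (n : ℝ)
    nlinarith
  have h2 : ∀ j : Fin m,
      ‖toEuc n ((1 / (∑ i, s j i * r j i)) • (Matrix.of fun i i' => r j i * r j i'))‖
        ≤ 1 / (eps * epst) := by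
    intro j
    rw [map_smul, norm_smul, toEuc_norm]
    have hRR : (∑ i, ∑ i', ((Matrix.of fun i i' => r j i * r j i') i i')^2)
        = (∑ i, (r j i)^2)^2 := by
      simp only [Matrix.of_apply]
      rw [sq, Finset.sum_mul_sum]
      exact Finset.sum_congr rfl fun x _ => Finset.sum_congr rfl fun y _ => by ring
    rw [hRR, Real.sqrt_sq (by positivity)]
    set R := ∑ i, (r j i)^2 with hRdef
    have hR0 : 0 ≤ R := by positivity
    have hsqR : Real.sqrt R ^ 2 = R := Real.sq_sqrt hR0
    have hkey : eps * epst * R < |∑ i, s j i * r j i| := by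
      refine lt_of_le_of_lt ?_ (hacc j)
      have h' := hstep j
      calc eps * epst * R = (eps * (epst * Real.sqrt R)) * Real.sqrt R := by
            linear_combination eps * epst * hsqR.symm
        _ ≤ (eps * Real.sqrt (∑ i, (s j i)^2)) * Real.sqrt R :=
            mul_le_mul_of_nonneg_right (mul_le_mul_of_nonneg_left h' heps.le)
              (Real.sqrt_nonneg R)
        _ = eps * Real.sqrt (∑ i, (s j i)^2) * Real.sqrt (∑ i, (r j i)^2) := by
            rw [hRdef]
    have hRpos : 0 < R := by
      rcases lt_or_eq_of_le hR0 with h | h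
      · exact h
      · exfalso
        have hr0 : ∀ i, r j i = 0 := by
          intro i
          have := Finset.sum_eq_zero_iff_of_nonneg (fun i _ => sq_nonneg (r j i)) |>.mp h.symm i (Finset.mem_univ i)
          exact pow_eq_zero_iff (by norm_num) |>.mp this
        have : (∑ i, s j i * r j i) = 0 := by simp [hr0]
        have h := hacc j
        rw [this] at h
        simp at h
        nlinarith [Real.sqrt_nonneg (∑ i, (s j i)^2), Real.sqrt_nonneg (∑ i, (r j i)^2),
          mul_nonneg (mul_nonneg heps.le (Real.sqrt_nonneg (∑ i, (s j i)^2))) (Real.sqrt_nonneg (∑ i, (r j i)^2))]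
    have habs : 0 < |∑ i, s j i * r j i| := lt_trans (by positivity) hkey
    rw [Real.norm_eq_abs, abs_div, abs_one, div_mul_eq_mul_div, one_mul]
    rw [div_le_div_iff₀ habs (by positivity)]
    nlinarith
  calc ‖toEuc n (delta • (1 : Matrix (Fin n) (Fin n) ℝ)) +
        ∑ j, toEuc n ((1 / (∑ i, s j i * r j i)) • (Matrix.of fun i i' => r j i * r j i'))‖
      ≤ ‖toEuc n (delta • (1 : Matrix (Fin n) (Fin n) ℝ))‖ +
        ∑ j, ‖toEuc n ((1 / (∑ i, s j i * r j i)) • (Matrix.of fun i i' => r j i * r j i'))‖ :=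
        (norm_add_le _ _).trans (by gcongr; exact norm_sum_le _ _)
    _ ≤ Real.sqrt n * deltaMax + ∑ _j : Fin m, 1 / (eps * epst) :=
        add_le_add h1 (Finset.sum_le_sum fun j _ => h2 j)
    _ = Real.sqrt n * deltaMax + m / (eps * epst) := by
        rw [Finset.sum_const, Finset.card_univ, Fintype.card_fin, nsmul_eq_mul, mul_one_div]
end

section
/- For μ > 0, λ ∈ ℝ, g ∈ ℝ, the point s* = -2g/(λ + √(λ² + 4|g|μ)) is a global minimizer of φ(t) = g·t + (1/2)·λ·t² + (μ/3)·|t|³ over ℝ, provided λ + √(λ² + 4|g|μ) > 0 (which holds automatically if g ≠ 0; if g = 0 and λ ≥ 0, take s* = 0). -/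
/-- s* = -2g/(λ + √(λ² + 4|g|μ)) is a global minimizer of
φ(t) = g·t + (1/2)·λ·t² + (μ/3)·|t|³. -/
theorem stmt11 (g lam mu : ℝ) (hmu : 0 < mu)
    (hden : 0 < lam + Real.sqrt (lam^2 + 4*|g| * mu)) :
    ∀ t : ℝ,
      g * (-2*g / (lam + Real.sqrt (lam^2 + 4*|g| * mu)))
        + (1/2) * lam * (-2*g / (lam + Real.sqrt (lam^2 + 4*|g| * mu)))^2
        + (mu/3) * |(-2 * g / (lam + Real.sqrt (lam^2 + 4*|g| * mu)))|^3
      ≤ g * t + (1/2) * lam * t^2 + (mu/3) * |t|^3 := by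
  intro t
  set r := Real.sqrt (lam^2 + 4*|g| * mu) with hr
  have hr0 : 0 ≤ r := Real.sqrt_nonneg _
  have hr2 : r^2 = lam^2 + 4 * |g| * mu := Real.sq_sqrt (by positivity)
  set D := lam + r with hD
  have hD0 : 0 < D := hden
  set a : ℝ := -2*g/D with ha
  have hDsq : D^2 = 2*lam*D + 4 * |g| * mu := by rw [hD]; nlinarith [hr2]
  have hA : |a| = 2*|g|/D := by
    rw [ha, abs_div, abs_of_pos hD0]
    congr 1
    rw [show (-2*g : ℝ) = (-2)*g by ring, abs_mul]
    norm_num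
  set A := |a| with hAdef
  have hA0 : 0 ≤ A := abs_nonneg _
  have hlam : lam = D/2 - mu*A := by
    rw [hA]
    field_simp
    nlinarith [hDsq]
  have hg : g = -(lam*a) - mu*A*a := by
    rw [hA, ha]
    field_simp
    linear_combination g * hDsq
  set T := |t| with hT
  have hT0 : 0 ≤ T := abs_nonneg _
  have key : (g*a + (1/2)*lam*a^2 + (mu/3)*A^3)
      + ((D/4)*(t-a)^2 + (mu/6)*((T-A)^2*(2*T+A)))
      = g*t + (1/2)*lam*t^2 + (mu/3)*T^3 := by
    rcases abs_choice a with h1 | h1 <;> rcases abs_choice t with h2 | h2 <;>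
      rw [hg, hlam, hAdef, hT, h1, h2] <;> ring
  have n1 : 0 ≤ (D/4)*(t-a)^2 := by positivity
  have n2 : 0 ≤ (mu/6)*((T-A)^2*(2*T+A)) := by positivity
  linarith [key]
end

section
/- For the scalar cubic φ(t) = g·t + (1/2)·λ·t² + (μ/3)·|t|³ with μ > 0, the minimizer value at s* = −2g/(λ + √(λ² + 4|g|μ)) (g ≠ 0) yields model decrease: φ(s*) < 0 = φ(0). -/
/-- Model decrease: for g ≠ 0, μ > 0, φ(s*) < 0 = φ(0) at
s* = −2g/(λ + √(λ² + 4|g|μ)). -/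
theorem stmt17 (g lam mu : ℝ) (hg : g ≠ 0) (hmu : 0 < mu) :
    g * (-2*g / (lam + Real.sqrt (lam^2 + 4*|g| * mu)))
      + (1/2) * lam * (-2*g / (lam + Real.sqrt (lam^2 + 4*|g| * mu)))^2
      + (mu/3) * |(-2*g / (lam + Real.sqrt (lam^2 + 4*|g| * mu)))|^3 < 0 := by
  have hG0 : 0 < |g| := abs_pos.mpr hg
  set r := Real.sqrt (lam^2 + 4*|g| * mu) with hr
  have hrnn : 0 ≤ r := Real.sqrt_nonneg _
  have hrsq : r^2 = lam^2 + 4 * |g| * mu := Real.sq_sqrt (by positivity)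
  have hrlam : |lam| < r := by
    nlinarith [sq_abs lam, abs_nonneg lam, mul_pos hG0 hmu]
  have hlam1 := neg_abs_le lam
  have hlam2 := le_abs_self lam
  have hD : 0 < lam + r := by linarith
  have habs : |(-2*g / (lam + r))| = 2*|g| / (lam + r) := by
    rw [abs_div, abs_of_pos hD]
    congr 1
    rw [abs_mul]
    norm_num
  rw [habs]
  have key : 0 < 3*(lam+r)*r - 4 * |g| * mu := by
    have h2 : 0 < lam + 2*r := by linarith
    nlinarith [mul_pos hD h2]
  have hg2 : g^2 = |g|^2 := (sq_abs g).symm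
  have hDne : (lam + r) ≠ 0 := ne_of_gt hD
  have hcube : |g|^3 = |g| * g^2 := by rw [hg2]; ring
  have heq : g * (-2 * g / (lam + r)) + 1 / 2 * lam * (-2 * g / (lam + r)) ^ 2
      + mu / 3 * (2 * |g| / (lam + r)) ^ 3
      = (2*g^2) * (4 * |g| * mu - 3*(lam+r)*r) / (3*(lam+r)^3) := by
    rw [show (2 * |g| / (lam + r)) ^ 3 = 8 * (|g| * g^2) / (lam+r)^3 by
      rw [div_pow, mul_pow, ← hcube]; ring]
    field_simp
    ring
  rw [heq]
  apply div_neg_of_neg_of_pos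
  · apply mul_neg_of_pos_of_neg
    · positivity
    · linarith
  · positivity
end
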